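/- Let S₁, ..., S_c be pairwise disjoint closed subsets of the unit sphere S^{n-1} in R^n, each of which is Lipschitz normally embedded, and let δ > 0 be a lower bound on the pairwise Euclidean distances dist(S_i, S_j) for i ≠ j. Then the union of the non-negative cones over the S_i (with vertex the origin) is Lipschitz normally embedded. -/

import Mathlib

open scoped ENNReal

noncomputable def pathLength {E : Type*} [PseudoEMetricSpace E] (γ : ℝ → E) : ℝ≥0∞ :=
  eVariationOn γ (Set.Icc 0 1)

noncomputable def innerDist {E : Type*} [PseudoEMetricSpace E] (S : Set E) (x y : E) : ℝ≥0∞ :=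
  ⨅ (γ : ℝ → E) (_ : ContinuousOn γ (Set.Icc 0 1)) (_ : γ 0 = x) (_ : γ 1 = y)
    (_ : γ '' Set.Icc 0 1 ⊆ S), pathLength γ

def IsLNEWith {E : Type*} [NormedAddCommGroup E] (L : ℝ) (S : Set E) : Prop :=
  ∀ x ∈ S, ∀ y ∈ S, innerDist S x y ≤ ENNReal.ofReal (L * dist x y)

def IsLNE {E : Type*} [NormedAddCommGroup E] (S : Set E) : Prop :=
  ∃ L > 0, IsLNEWith L S

def nonnegCone {n : ℕ} (S : Set (EuclideanSpace ℝ (Fin n))) : Set (EuclideanSpace ℝ (Fin n)) :=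
  {x | ∃ t : ℝ, 0 ≤ t ∧ ∃ u ∈ S, x = t • u}

/-!
Inside one cone, join `t • u` to `s • v` (with `u, v ∈ Sᵢ` unit vectors) radially down to the
sphere of radius `r = min t s`, then along `r` times a short path of `Sᵢ` from `u` to `v`, then
radially out again. The identity `‖t • u - s • v‖² = (t - s)² + t s ‖u - v‖²` bounds the radial
part `|t - s|` and the spherical part `r ‖u - v‖` by `‖t • u - s • v‖`. Between two different
cones go through the vertex: the same identity and `δ ≤ ‖u - v‖ ≤ 2` give
`δ (t + s) ≤ 2 ‖t • u - s • v‖`.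
-/

open Set
open scoped NNReal

section Concat

variable {E : Type*} {γ₁ γ₂ : ℝ → E}

noncomputable def concatPath (γ₁ γ₂ : ℝ → E) (r : ℝ) : E :=
  if 2 * r ≤ 1 then γ₁ (2 * r) else γ₂ (2 * r - 1)

theorem concatPath_zero : concatPath γ₁ γ₂ 0 = γ₁ 0 := by norm_num [concatPath]

theorem concatPath_one : concatPath γ₁ γ₂ 1 = γ₂ 1 := by norm_num [concatPath]

theorem concatPath_image_subset {S : Set E} (h₁ : γ₁ '' Icc 0 1 ⊆ S) (h₂ : γ₂ '' Icc 0 1 ⊆ S) :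
    concatPath γ₁ γ₂ '' Icc 0 1 ⊆ S := by
  rintro _ ⟨r, ⟨hr0, hr1⟩, rfl⟩
  unfold concatPath
  split_ifs with hr
  · exact h₁ ⟨2 * r, ⟨by linarith, by linarith⟩, rfl⟩
  · exact h₂ ⟨2 * r - 1, ⟨by linarith, by linarith⟩, rfl⟩

theorem concatPath_eqOn_right (h : γ₁ 1 = γ₂ 0) :
    EqOn (concatPath γ₁ γ₂) (fun r => γ₂ (2 * r + -1)) (Icc (1 / 2) 1) := by
  rintro r ⟨hr, -⟩
  rcases hr.eq_or_lt with rfl | hr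
  · norm_num [concatPath, h]
  · simp [concatPath, not_le.2 (by linarith : 1 < 2 * r), sub_eq_add_neg]

end Concat

section Paths

variable {E F : Type*} [PseudoEMetricSpace E] [PseudoEMetricSpace F]

theorem innerDist_le_pathLength {S : Set E} {γ : ℝ → E} (hγ : ContinuousOn γ (Icc 0 1))
    (hγS : γ '' Icc 0 1 ⊆ S) : innerDist S (γ 0) (γ 1) ≤ pathLength γ :=
  iInf_le_of_le γ <| iInf_le_of_le hγ <| iInf_le_of_le rfl <| iInf_le_of_le rfl <| iInf_le _ hγS

theorem innerDist_anti {S T : Set E} (h : S ⊆ T) (x y : E) :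
    innerDist T x y ≤ innerDist S x y :=
  iInf_mono fun _ => iInf_mono fun _ => iInf_mono fun _ => iInf_mono fun _ =>
    iInf_mono' fun hS => ⟨hS.trans h, le_rfl⟩

theorem LipschitzOnWith.innerDist_le_mul {f : E → F} {K : ℝ≥0} {S : Set E} {T : Set F}
    (hf : LipschitzOnWith K f S) (hfST : MapsTo f S T) (hK : K ≠ 0) (x y : E) :
    innerDist T (f x) (f y) ≤ K * innerDist S x y := by
  simp only [innerDist, ENNReal.mul_iInf_of_ne (ENNReal.coe_ne_zero.2 hK) ENNReal.coe_ne_top,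
    le_iInf_iff]
  rintro γ hγ rfl rfl hγS
  have hγS' : MapsTo γ (Icc 0 1) S := fun r hr => hγS (mem_image_of_mem γ hr)
  calc _ ≤ pathLength (f ∘ γ) :=
        innerDist_le_pathLength (hf.continuousOn.comp hγ hγS') <| by
          rw [image_comp]; exact hfST.image_subset.trans' (image_mono hγS)
    _ ≤ K * pathLength γ := hf.comp_eVariationOn_le hγS'

theorem eVariationOn_comp_affine (γ : ℝ → E) {a : ℝ} (ha : 0 < a) (b c d : ℝ) :
    eVariationOn (fun r => γ (a * r + b)) (Icc c d) =
      eVariationOn γ (Icc (a * c + b) (a * d + b)) := by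
  rw [← image_affine_Icc' ha]
  exact eVariationOn.comp_eq_of_monotoneOn γ _
    (((monotone_id.const_mul ha.le).add_const b).monotoneOn _)

variable {γ₁ γ₂ : ℝ → E}

theorem continuousOn_concatPath (h₁ : ContinuousOn γ₁ (Icc 0 1)) (h₂ : ContinuousOn γ₂ (Icc 0 1))
    (h : γ₁ 1 = γ₂ 0) : ContinuousOn (concatPath γ₁ γ₂) (Icc 0 1) := by
  have hcont : Continuous fun r : ℝ => 2 * r := by fun_prop
  refine ContinuousOn.if ?_ ?_ ?_
  · rintro r ⟨-, hr⟩
    rw [show 2 * r = 1 from frontier_le_subset_eq hcont continuous_const hr, h, sub_self]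
  · rw [closure_le_eq hcont continuous_const]
    exact h₁.comp hcont.continuousOn fun r ⟨⟨hr, _⟩, hr'⟩ => ⟨by linarith, hr'⟩
  · refine h₂.comp (by fun_prop) fun r ⟨⟨_, hr⟩, hr'⟩ => ?_
    have := closure_lt_subset_le continuous_const hcont (by simpa only [not_le] using hr')
    exact ⟨by simpa using this, by linarith⟩

theorem pathLength_concatPath (h : γ₁ 1 = γ₂ 0) :
    pathLength (concatPath γ₁ γ₂) = pathLength γ₁ + pathLength γ₂ := by
  have h₁ : EqOn (concatPath γ₁ γ₂) (fun r => γ₁ (2 * r + 0)) (Icc 0 (1 / 2)) :=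
    fun r hr => by simp [concatPath, (by linarith [hr.2] : 2 * r ≤ 1)]
  have hsplit := eVariationOn.Icc_add_Icc (concatPath γ₁ γ₂) (by norm_num : (0 : ℝ) ≤ 1 / 2)
    (by norm_num : (1 / 2 : ℝ) ≤ 1) (mem_univ _)
  simp only [univ_inter] at hsplit
  rw [pathLength, ← hsplit, eVariationOn.eq_of_eqOn h₁,
    eVariationOn.eq_of_eqOn (concatPath_eqOn_right h), eVariationOn_comp_affine _ two_pos,
    eVariationOn_comp_affine _ two_pos]
  norm_num [pathLength]

theorem innerDist_triangle (S : Set E) (x y z : E) :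
    innerDist S x z ≤ innerDist S x y + innerDist S y z := by
  simp only [innerDist, ENNReal.iInf_add, ENNReal.add_iInf, le_iInf_iff]
  intro γ₂ hc₂ h20 h21 hγ₂ γ₁ hc₁ h10 h11 hγ₁
  subst h10 h11 h21
  rw [← concatPath_zero (γ₁ := γ₁) (γ₂ := γ₂), ← concatPath_one (γ₁ := γ₁) (γ₂ := γ₂),
    ← pathLength_concatPath h20.symm]
  exact innerDist_le_pathLength (continuousOn_concatPath hc₁ hc₂ h20.symm)
    (concatPath_image_subset hγ₁ hγ₂)

end Paths

section Normed

variable {F : Type*} [NormedAddCommGroup F] [NormedSpace ℝ F]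

theorem innerDist_le_edist_of_segment_subset {S : Set F} {x y : F} (h : segment ℝ x y ⊆ S) :
    innerDist S x y ≤ edist x y := by
  have hγ : LipschitzWith (nndist x y) (AffineMap.lineMap x y : ℝ → F) := lipschitzWith_lineMap x y
  calc innerDist S x y
      = innerDist S (AffineMap.lineMap x y (0 : ℝ)) (AffineMap.lineMap x y (1 : ℝ)) := by simp
    _ ≤ eVariationOn (AffineMap.lineMap x y ∘ id) (Icc (0 : ℝ) 1) :=
        innerDist_le_pathLength hγ.continuous.continuousOn
          (by rw [← segment_eq_image_lineMap]; exact h)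
    _ ≤ nndist x y * eVariationOn id (Icc (0 : ℝ) 1) :=
        (hγ.lipschitzOnWith (s := univ)).comp_eVariationOn_le (mapsTo_univ _ _)
    _ = nndist x y * ENNReal.ofReal (id 1 - id 0) := by
        rw [← (monotoneOn_id (s := univ)).eVariationOn_eq (mem_univ 0) (mem_univ 1), univ_inter]
    _ = edist x y := by rw [id, id, sub_zero, ENNReal.ofReal_one, mul_one, edist_nndist]

end Normed

section UnitVectors

variable {F : Type*} [NormedAddCommGroup F] [InnerProductSpace ℝ F] {u v : F} {t s : ℝ}

theorem dist_smul_smul_sq_of_norm_eq_one (hu : ‖u‖ = 1) (hv : ‖v‖ = 1) (t s : ℝ) :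
    dist (t • u) (s • v) ^ 2 = (t - s) ^ 2 + t * s * dist u v ^ 2 := by
  simp only [dist_eq_norm, @norm_sub_sq_real, norm_smul, real_inner_smul_left,
    real_inner_smul_right, hu, hv, Real.norm_eq_abs, mul_one, sq_abs]
  ring

theorem abs_sub_le_dist_smul_smul (hu : ‖u‖ = 1) (hv : ‖v‖ = 1) (hts : 0 ≤ t * s) :
    |t - s| ≤ dist (t • u) (s • v) := by
  refine abs_le_of_sq_le_sq ?_ dist_nonneg
  rw [dist_smul_smul_sq_of_norm_eq_one hu hv]
  nlinarith [sq_nonneg (dist u v)]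

theorem min_mul_dist_le_dist_smul_smul (hu : ‖u‖ = 1) (hv : ‖v‖ = 1) (ht : 0 ≤ t) (hs : 0 ≤ s) :
    min t s * dist u v ≤ dist (t • u) (s • v) := by
  have hmin : min t s * min t s ≤ t * s :=
    mul_le_mul (min_le_left t s) (min_le_right t s) (le_min ht hs) ht
  refine (sq_le_sq₀ (mul_nonneg (le_min ht hs) dist_nonneg) dist_nonneg).1 ?_
  rw [dist_smul_smul_sq_of_norm_eq_one hu hv]
  nlinarith [sq_nonneg (t - s), sq_nonneg (dist u v)]

theorem dist_mul_add_le_two_mul_dist_smul_smul (hu : ‖u‖ = 1) (hv : ‖v‖ = 1) (ht : 0 ≤ t)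
    (hs : 0 ≤ s) : dist u v * (t + s) ≤ 2 * dist (t • u) (s • v) := by
  have h2 : dist u v ≤ 2 := by linarith [dist_le_norm_add_norm u v]
  refine (sq_le_sq₀ (mul_nonneg dist_nonneg (add_nonneg ht hs))
    (mul_nonneg zero_le_two dist_nonneg)).1 ?_
  rw [mul_pow, mul_pow, dist_smul_smul_sq_of_norm_eq_one hu hv]
  nlinarith [mul_nonneg (sq_nonneg (t - s)) (sub_nonneg.2 (pow_le_pow_left₀ dist_nonneg h2 2)),
    mul_nonneg ht hs]

end UnitVectors

section Cone

variable {n : ℕ} {A B : Set (EuclideanSpace ℝ (Fin n))} {u v : EuclideanSpace ℝ (Fin n)} {t s : ℝ}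

theorem smul_mem_nonnegCone (hu : u ∈ A) (ht : 0 ≤ t) : t • u ∈ nonnegCone A :=
  ⟨t, ht, u, hu, rfl⟩

theorem segment_smul_subset_nonnegCone (hu : u ∈ A) (ht : 0 ≤ t) (hs : 0 ≤ s) :
    segment ℝ (t • u) (s • u) ⊆ nonnegCone A := by
  rw [segment_eq_image]
  rintro _ ⟨θ, ⟨hθ₀, hθ₁⟩, rfl⟩
  refine ⟨(1 - θ) * t + θ * s, ?_, u, hu, by module⟩
  exact add_nonneg (mul_nonneg (sub_nonneg.2 hθ₁) ht) (mul_nonneg hθ₀ hs)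

theorem innerDist_nonnegCone_smul_smul_le_abs_sub (hu : u ∈ A) (hu₁ : ‖u‖ = 1) (ht : 0 ≤ t)
    (hs : 0 ≤ s) : innerDist (nonnegCone A) (t • u) (s • u) ≤ ENNReal.ofReal |t - s| := by
  refine (innerDist_le_edist_of_segment_subset
    (segment_smul_subset_nonnegCone hu ht hs)).trans_eq ?_
  rw [edist_dist, dist_eq_norm, ← sub_smul, norm_smul, hu₁, mul_one, Real.norm_eq_abs]

theorem innerDist_nonnegCone_smul_le_mul (hu : u ∈ A) (ht : 0 ≤ t) :
    innerDist (nonnegCone A) (t • u) (t • v) ≤ ENNReal.ofReal t * innerDist A u v := by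
  rcases ht.eq_or_lt with rfl | ht
  · have h0 : segment ℝ (0 : EuclideanSpace ℝ (Fin n)) 0 ⊆ nonnegCone A := by
      simpa [segment_same] using smul_mem_nonnegCone hu le_rfl
    simpa using innerDist_le_edist_of_segment_subset h0
  · rw [← Real.enorm_eq_ofReal ht.le, enorm_eq_nnnorm]
    exact (lipschitzWith_smul t).lipschitzOnWith.innerDist_le_mul
      (fun w hw => smul_mem_nonnegCone hw ht.le) (nnnorm_ne_zero_iff.2 ht.ne') u v

theorem innerDist_nonnegCone_le_of_isLNEWith {L : ℝ} (hL : IsLNEWith L A) (hL₀ : 0 ≤ L)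
    (hu : u ∈ A) (hv : v ∈ A) (hu₁ : ‖u‖ = 1) (hv₁ : ‖v‖ = 1) (ht : 0 ≤ t) (hs : 0 ≤ s) :
    innerDist (nonnegCone A) (t • u) (s • v) ≤ ENNReal.ofReal ((L + 1) * dist (t • u) (s • v)) := by
  set r := min t s with hr
  have hr₀ : 0 ≤ r := le_min ht hs
  calc innerDist (nonnegCone A) (t • u) (s • v)
      ≤ innerDist (nonnegCone A) (t • u) (r • u) + innerDist (nonnegCone A) (r • u) (r • v)
          + innerDist (nonnegCone A) (r • v) (s • v) :=
        (innerDist_triangle _ _ (r • v) _).trans (by gcongr; exact innerDist_triangle _ _ _ _)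
    _ ≤ ENNReal.ofReal |t - r| + ENNReal.ofReal r * ENNReal.ofReal (L * dist u v)
          + ENNReal.ofReal |r - s| := by
        gcongr
        · exact innerDist_nonnegCone_smul_smul_le_abs_sub hu hu₁ ht hr₀
        · exact (innerDist_nonnegCone_smul_le_mul hu hr₀).trans (by gcongr; exact hL u hu v hv)
        · exact innerDist_nonnegCone_smul_smul_le_abs_sub hv hv₁ hr₀ hs
    _ = ENNReal.ofReal (|t - s| + r * (L * dist u v)) := by
        have hsplit : |t - r| + |r - s| = |t - s| := by
          rcases le_total t s with h | h <;> simp [hr, h, abs_of_nonpos, abs_of_nonneg]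
        rw [← ENNReal.ofReal_mul hr₀, ← ENNReal.ofReal_add (abs_nonneg _) (by positivity),
          ← ENNReal.ofReal_add (by positivity) (abs_nonneg _), ← hsplit]
        ring_nf
    _ ≤ ENNReal.ofReal ((L + 1) * dist (t • u) (s • v)) := by
        gcongr
        nlinarith [abs_sub_le_dist_smul_smul hu₁ hv₁ (mul_nonneg ht hs),
          min_mul_dist_le_dist_smul_smul hu₁ hv₁ ht hs]

theorem innerDist_le_add_of_nonnegCone_subset {U : Set (EuclideanSpace ℝ (Fin n))}
    (hAU : nonnegCone A ⊆ U) (hBU : nonnegCone B ⊆ U) (hu : u ∈ A) (hv : v ∈ B) (hu₁ : ‖u‖ = 1)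
    (hv₁ : ‖v‖ = 1) (ht : 0 ≤ t) (hs : 0 ≤ s) :
    innerDist U (t • u) (s • v) ≤ ENNReal.ofReal (t + s) := by
  have hto0 : innerDist U (t • u) 0 ≤ ENNReal.ofReal t := by
    simpa [abs_of_nonneg ht] using (innerDist_anti hAU _ _).trans
      (innerDist_nonnegCone_smul_smul_le_abs_sub hu hu₁ ht le_rfl)
  have hfrom0 : innerDist U 0 (s • v) ≤ ENNReal.ofReal s := by
    simpa [abs_of_nonneg hs] using (innerDist_anti hBU _ _).trans
      (innerDist_nonnegCone_smul_smul_le_abs_sub hv hv₁ le_rfl hs)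
  rw [ENNReal.ofReal_add ht hs]
  exact (innerDist_triangle U _ 0 _).trans (add_le_add hto0 hfrom0)

end Cone

theorem union_cones_LNE_general {n c : ℕ} (S : Fin c → Set (EuclideanSpace ℝ (Fin n)))
    (hsub : ∀ i, S i ⊆ Metric.sphere (0 : EuclideanSpace ℝ (Fin n)) 1)
    (hLNE : ∀ i, IsLNE (S i))
    (δ : ℝ) (hδ : 0 < δ)
    (hsep : ∀ i j, i ≠ j → ∀ x ∈ S i, ∀ y ∈ S j, δ ≤ dist x y) :
    IsLNE (⋃ i, nonnegCone (S i)) := by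
  choose L hL₀ hL using hLNE
  have hLsum : ∀ i, L i ≤ ∑ j, L j := fun i =>
    Finset.single_le_sum (fun j _ => (hL₀ j).le) (Finset.mem_univ i)
  have hLsum₀ : 0 ≤ ∑ j, L j := Finset.sum_nonneg fun j _ => (hL₀ j).le
  have h2δ : 0 < 2 / δ := div_pos two_pos hδ
  refine ⟨∑ i, L i + 1 + 2 / δ, by positivity, ?_⟩
  rintro _ hx _ hy
  obtain ⟨i, t, ht, u, hu, rfl⟩ := mem_iUnion.1 hx
  obtain ⟨j, s, hs, v, hv, rfl⟩ := mem_iUnion.1 hy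
  have hu₁ : ‖u‖ = 1 := mem_sphere_zero_iff_norm.1 (hsub i hu)
  have hv₁ : ‖v‖ = 1 := mem_sphere_zero_iff_norm.1 (hsub j hv)
  have hcone := subset_iUnion (fun i => nonnegCone (S i))
  rcases eq_or_ne i j with rfl | hij
  · calc _ ≤ innerDist (nonnegCone (S i)) (t • u) (s • v) := innerDist_anti (hcone i) _ _
      _ ≤ ENNReal.ofReal ((L i + 1) * dist (t • u) (s • v)) :=
          innerDist_nonnegCone_le_of_isLNEWith (hL i) (hL₀ i).le hu hv hu₁ hv₁ ht hs
      _ ≤ _ := by gcongr ENNReal.ofReal (?_ * _); linarith [hLsum i]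
  · have hδts : δ * (t + s) ≤ 2 * dist (t • u) (s • v) :=
      (mul_le_mul_of_nonneg_right (hsep i j hij u hu v hv) (add_nonneg ht hs)).trans
        (dist_mul_add_le_two_mul_dist_smul_smul hu₁ hv₁ ht hs)
    calc _ ≤ ENNReal.ofReal (t + s) :=
          innerDist_le_add_of_nonnegCone_subset (hcone i) (hcone j) hu hv hu₁ hv₁ ht hs
      _ ≤ ENNReal.ofReal (2 / δ * dist (t • u) (s • v)) := by
          gcongr; rwa [div_mul_eq_mul_div, le_div_iff₀ hδ, mul_comm]
      _ ≤ _ := by gcongr ENNReal.ofReal (?_ * _); linarith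

theorem union_cones_LNE {n c : ℕ} (S : Fin c → Set (EuclideanSpace ℝ (Fin n)))
    (hsub : ∀ i, S i ⊆ Metric.sphere (0 : EuclideanSpace ℝ (Fin n)) 1)
    (hclosed : ∀ i, IsClosed (S i))
    (hdisj : Pairwise (Function.onFun Disjoint S))
    (hLNE : ∀ i, IsLNE (S i))
    (δ : ℝ) (hδ : 0 < δ)
    (hsep : ∀ i j, i ≠ j → ∀ x ∈ S i, ∀ y ∈ S j, δ ≤ dist x y) :
    IsLNE (⋃ i, nonnegCone (S i)) :=
  union_cones_LNE_general S hsub hLNE δ hδ hsep
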